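/- In the polynomial ring ℚ[A,q], let F₁ := −A²·(A⁶ + 3A⁴ + 2A² + 1) and let F₂ := A⁴q²·(A¹²q¹² + 3A¹⁰q¹⁰ + 3A¹⁰q⁸ + 5A⁸q⁸ + 5A⁸q⁶ + 3A⁸q⁴ + 4A⁶q⁶ + 6A⁶q⁴ + 3A⁶q² + A⁶ + 3A⁴q⁴ + 4A⁴q² + 3A⁴ + 2A²q² + 2A² + 1). Then (1 + A²q²) divides F₂ + A²q²·F₁ in ℚ[A,q]. -/

import Mathlib

namespace Stmt9

open MvPolynomial

noncomputable def A : MvPolynomial (Fin 2) ℚ := X 0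

noncomputable def q : MvPolynomial (Fin 2) ℚ := X 1

/-- The first F-factor of the differential expansion for the knot 9₃₅. -/
noncomputable def F₁ : MvPolynomial (Fin 2) ℚ :=
  -A ^ 2 * (A ^ 6 + 3 * A ^ 4 + 2 * A ^ 2 + 1)

/-- The second F-factor of the differential expansion for the knot 9₃₅. -/
noncomputable def F₂ : MvPolynomial (Fin 2) ℚ :=
  A ^ 4 * q ^ 2 *
    (A ^ 12 * q ^ 12 + 3 * A ^ 10 * q ^ 10 + 3 * A ^ 10 * q ^ 8 + 5 * A ^ 8 * q ^ 8 +
      5 * A ^ 8 * q ^ 6 + 3 * A ^ 8 * q ^ 4 + 4 * A ^ 6 * q ^ 6 + 6 * A ^ 6 * q ^ 4 +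
      3 * A ^ 6 * q ^ 2 + A ^ 6 + 3 * A ^ 4 * q ^ 4 + 4 * A ^ 4 * q ^ 2 + 3 * A ^ 4 +
      2 * A ^ 2 * q ^ 2 + 2 * A ^ 2 + 1)

/- The cofactor is the quotient of long division by `1 + A²q²` as a polynomial in `q`
over `ℚ[A]`; the remainder vanishes. -/
theorem F₂_add_mul_F₁_eq :
    F₂ + A ^ 2 * q ^ 2 * F₁ =
      (1 + A ^ 2 * q ^ 2) * (A ^ 6 * q ^ 4 *
        (A ^ 8 * q ^ 8 + 2 * A ^ 6 * q ^ 6 + 3 * A ^ 6 * q ^ 4 + 3 * A ^ 4 * q ^ 4 +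
          2 * A ^ 4 * q ^ 2 + 3 * A ^ 4 + A ^ 2 * q ^ 2 + 4 * A ^ 2 + 2)) := by
  unfold F₁ F₂
  ring

/-- `(1 + A²q²)` divides `F₂ + A²q²·F₁` in `ℚ[A,q]`. -/
theorem divisibility_F2 :
    (1 + A ^ 2 * q ^ 2) ∣ F₂ + A ^ 2 * q ^ 2 * F₁ :=
  Dvd.intro _ F₂_add_mul_F₁_eq.symm

end Stmt9
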